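/- Assume additionally that f is L-Lipschitz in y with L > 0 and that diam(Y) > 0. Let α ≥ 0 and let k be a positive integer with k ≥ (n_ξ+1) − (n_ξ+1)(e^{α/(L·diam(Y))} − 1)/e^{α/(L·diam(Y))} (equivalently, k ≥ (n_ξ+1)·e^{−α/(L·diam(Y))}). Then opt(k) ≤ opt(2RO) + α. -/

import Mathlib

/-- Worst-case value `sup_{ξ ∈ U} min_{y ∈ S} F(y, ξ)` (minimum written as `sInf` of the image,
which is the minimum for a finite nonempty `S`). -/
noncomputable def worstVal {Eξ Ey : Type*} (U : Set Eξ) (S : Set Ey) (F : Ey → Eξ → ℝ) : ℝ :=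
  sSup ((fun ξ => sInf ((fun y => F y ξ) '' S)) '' U)

/-- The `k`-adaptability value for a fixed first stage:
`inf_{y¹,…,y^k ∈ S} sup_{ξ ∈ U} min_{i ∈ [k]} F(yⁱ, ξ)`. -/
noncomputable def kVal {Eξ Ey : Type*} (U : Set Eξ) (S : Set Ey) (F : Ey → Eξ → ℝ) (k : ℕ) : ℝ :=
  sInf {v | ∃ y : Fin k → Ey, (∀ i, y i ∈ S) ∧ v = worstVal U (Set.range y) F}

/-!
Fix a first-stage decision `x` and let `v` be its worst-case value. Every scenario `ξ ∈ U` lies in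
some sublevel set `{f x y · ≤ v}`; their complements in `U` are convex because `f x y` is concave,
so by Helly's theorem at most `n_ξ + 1` decisions `T` already cover `U`. Sion's minimax theorem
then gives weights `w` on `T` with `∑ w_y f x y ξ ≤ v` for every `ξ`. The `k` heaviest decisions
carry mass at least `k / (n_ξ + 1)`, and for each `ξ` the best of them exceeds the weighted average
by at most `L · diam Y` times the discarded mass, which is at most `α` because `1 - t ≤ e^{-t}`.
-/

open Finset

theorem Finset.exists_subset_card_eq_mul_sum_le {ι : Type*} {w : ι → ℝ} {k : ℕ} (s : Finset ι)
    (hw : ∀ i ∈ s, 0 ≤ w i) (hk : k ≤ #s) :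
    ∃ t ⊆ s, #t = k ∧ (k : ℝ) * ∑ i ∈ s, w i ≤ #s * ∑ i ∈ t, w i := by
  classical
  induction s using Finset.strongInduction with
  | H s ih =>
  rcases hk.eq_or_lt with hks | hks
  · exact ⟨s, subset_rfl, hks.symm, by rw [hks]⟩
  obtain ⟨i₀, hi₀, hmin⟩ := s.exists_min_image w (card_pos.mp (by omega))
  obtain ⟨t, hts, htk, ht⟩ := ih (s.erase i₀) (erase_ssubset hi₀)
    (fun i hi => hw i (mem_of_mem_erase hi)) (by rw [card_erase_of_mem hi₀]; omega)
  refine ⟨t, hts.trans (erase_subset _ _), htk, ?_⟩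
  have hsum : ∑ i ∈ s.erase i₀, w i + w i₀ = ∑ i ∈ s, w i := sum_erase_add _ _ hi₀
  have hcard : (#(s.erase i₀) : ℝ) + 1 = #s := by
    rw [card_erase_of_mem hi₀]; norm_cast; omega
  have havg : (#(s.erase i₀) : ℝ) * w i₀ ≤ ∑ i ∈ s.erase i₀, w i := by
    simpa using card_nsmul_le_sum _ w (w i₀) fun i hi => hmin i (mem_of_mem_erase hi)
  have hkn : (k : ℝ) ≤ #(s.erase i₀) := by rw [card_erase_of_mem hi₀]; norm_cast; omega
  have hkm : k * w i₀ ≤ ∑ i ∈ t, w i := by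
    rcases (Nat.cast_nonneg k : (0 : ℝ) ≤ k).eq_or_lt with hk0 | hk0
    · rw [← hk0, zero_mul]
      exact sum_nonneg fun i hi => hw i (hts.trans (erase_subset _ _) hi)
    · refine le_of_mul_le_mul_left ?_ (hk0.trans_le hkn)
      nlinarith [mul_le_mul_of_nonneg_left havg hk0.le]
  rw [← hsum, ← hcard]
  linarith

theorem exists_mem_stdSimplex_forall_sum_mul_le {ι E : Type*} [Fintype ι] [TopologicalSpace E]
    [AddCommGroup E] [Module ℝ E] [IsTopologicalAddGroup E] [ContinuousSMul ℝ E] {U : Set E}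
    (hUcomp : IsCompact U) (hUconv : Convex ℝ U) (hUne : U.Nonempty) {G : ι → E → ℝ}
    (hcont : ∀ i, ContinuousOn (G i) U) (hconc : ∀ i, ConcaveOn ℝ U (G i)) {v : ℝ}
    (hcov : ∀ ξ ∈ U, ∃ i, G i ξ ≤ v) :
    ∃ w ∈ stdSimplex ℝ ι, ∀ ξ ∈ U, ∑ i, w i * G i ξ ≤ v := by
  classical
  obtain ⟨i₀, -⟩ := hcov _ hUne.some_mem
  have hconc_sum (w : ι → ℝ) (hw : w ∈ stdSimplex ℝ ι) :
      ConcaveOn ℝ U fun ξ => ∑ i, w i * G i ξ := by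
    convert Finset.sum_induction (s := univ) (fun i => w i • G i) (ConcaveOn ℝ U)
      (fun _ _ => ConcaveOn.add) (concaveOn_const 0 hUconv) fun i _ => (hconc i).smul (hw.1 i)
      using 1
    ext ξ
    simp only [Finset.sum_apply, Pi.smul_apply, smul_eq_mul]
  -- At a saddle point `(w, ξ₀)` of the payoff, `w` fares against every `ξ` no worse than the
  -- vertex `Pi.single i 1` fares against `ξ₀`, for an `i` with `G i ξ₀ ≤ v`.
  obtain ⟨w, hw, ξ₀, hξ₀, hsaddle⟩ := Sion.exists_isSaddlePointOn
    (f := fun (w : ι → ℝ) ξ => ∑ i, w i * G i ξ) ⟨_, single_mem_stdSimplex ℝ i₀⟩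
    (convex_stdSimplex ℝ ι) (isCompact_stdSimplex ℝ ι)
    (fun ξ _ => (by fun_prop : Continuous fun w : ι → ℝ => ∑ i, w i * G i ξ)
      |>.lowerSemicontinuous.lowerSemicontinuousOn _)
    (fun ξ _ => (((dotProductBilin ℝ ℝ).flip fun i => G i ξ).convexOn
      (convex_stdSimplex ℝ ι)).quasiconvexOn)
    hUconv hUne hUcomp
    (fun w _ => (continuousOn_finsetSum _ fun i _ =>
      continuousOn_const.mul (hcont i)).upperSemicontinuousOn)
    (fun w hw => (hconc_sum w hw).quasiconcaveOn)
  obtain ⟨i, hi⟩ := hcov ξ₀ hξ₀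
  refine ⟨w, hw, fun ξ hξ => (hsaddle _ (single_mem_stdSimplex ℝ i) ξ hξ).trans ?_⟩
  simpa [Pi.single_apply] using hi

theorem exists_subset_card_le_finrank_add_one_forall_exists_le {ι E : Type*} [AddCommGroup E]
    [Module ℝ E] [FiniteDimensional ℝ E] {U : Set E} {g : ι → E → ℝ} {s : Finset ι}
    (hconc : ∀ i ∈ s, ConcaveOn ℝ U (g i)) {v : ℝ} (hcov : ∀ ξ ∈ U, ∃ i ∈ s, g i ξ ≤ v) :
    ∃ t ⊆ s, #t ≤ Module.finrank ℝ E + 1 ∧ ∀ ξ ∈ U, ∃ i ∈ t, g i ξ ≤ v := by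
  rcases s.eq_empty_or_nonempty with rfl | ⟨i₀, hi₀⟩
  · exact ⟨∅, subset_rfl, by simp, hcov⟩
  let B i := {ξ ∈ U | v < g i ξ}
  have hempty : ¬ (⋂ i ∈ s, B i).Nonempty := by
    rintro ⟨ξ, hξ⟩
    simp only [Set.mem_iInter] at hξ
    obtain ⟨i, hi, hle⟩ := hcov ξ (hξ i₀ hi₀).1
    exact (hξ i hi).2.not_ge hle
  obtain ⟨t, hts, hcard, ht⟩ :
      ∃ t ⊆ s, #t ≤ Module.finrank ℝ E + 1 ∧ ¬ (⋂ i ∈ t, B i).Nonempty := by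
    by_contra! h
    exact hempty (Convex.helly_theorem' (fun i hi => (hconc i hi).convex_gt v) h)
  refine ⟨t, hts, hcard, fun ξ hξ => ?_⟩
  by_contra! hlt
  exact ht ⟨ξ, Set.mem_iInter₂.2 fun i hi => ⟨hξ, hlt i hi⟩⟩

theorem exists_mem_le_sum_mul_add {ι : Type*} [Fintype ι] {w : ι → ℝ} (hw : w ∈ stdSimplex ℝ ι)
    {s : Finset ι} (hs : s.Nonempty) {a : ι → ℝ} {δ : ℝ} (hδ : ∀ i j, a i ≤ a j + δ) :
    ∃ i ∈ s, a i ≤ ∑ j, w j * a j + (1 - ∑ j ∈ s, w j) * δ := by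
  classical
  obtain ⟨i, hi, hmin⟩ := s.exists_min_image a hs
  refine ⟨i, hi, ?_⟩
  have hin : (∑ j ∈ s, w j) * a i ≤ ∑ j ∈ s, w j * a j := by
    rw [sum_mul]
    exact sum_le_sum fun j hj => mul_le_mul_of_nonneg_left (hmin j hj) (hw.1 j)
  have hout : (∑ j ∈ sᶜ, w j) * (a i - δ) ≤ ∑ j ∈ sᶜ, w j * a j := by
    rw [sum_mul]
    exact sum_le_sum fun j _ => mul_le_mul_of_nonneg_left (by linarith [hδ i j]) (hw.1 j)
  have hmass : ∑ j ∈ s, w j + ∑ j ∈ sᶜ, w j = 1 := (sum_add_sum_compl s w).trans hw.2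
  have hai : a i = (∑ j ∈ s, w j) * a i + (∑ j ∈ sᶜ, w j) * a i := by
    rw [← add_mul, hmass, one_mul]
  rw [← sum_add_sum_compl s fun j => w j * a j, ← hmass, add_sub_cancel_left]
  linarith [mul_sub (∑ j ∈ sᶜ, w j) (a i) δ]

theorem exists_finset_card_le_one_sub_sum_mul_le {ι : Type*} [Fintype ι] [Nonempty ι]
    {w : ι → ℝ} (hw : w ∈ stdSimplex ℝ ι) {n : ℝ} (hn : (Fintype.card ι : ℝ) ≤ n) {k : ℕ}
    (hk1 : 1 ≤ k) {δ α : ℝ} (hδ : 0 ≤ δ) (hα : 0 ≤ α) (hk : (n - k) * δ ≤ n * α) :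
    ∃ R : Finset ι, R.Nonempty ∧ #R ≤ k ∧ (1 - ∑ i ∈ R, w i) * δ ≤ α := by
  by_cases hkι : k ≤ Fintype.card ι
  · obtain ⟨R, -, hRk, hR⟩ :=
      (univ : Finset ι).exists_subset_card_eq_mul_sum_le (fun i _ => hw.1 i) (by simpa using hkι)
    refine ⟨R, card_pos.1 (by omega), hRk.le, ?_⟩
    rw [hw.2, mul_one, card_univ] at hR
    have hkR : (k : ℝ) ≤ n * ∑ i ∈ R, w i :=
      hR.trans (mul_le_mul_of_nonneg_right hn (sum_nonneg fun i _ => hw.1 i))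
    have hn0 : 0 < n := lt_of_lt_of_le (by exact_mod_cast Fintype.card_pos) hn
    refine le_of_mul_le_mul_left ?_ hn0
    nlinarith
  · refine ⟨univ, univ_nonempty, by simpa using (not_le.1 hkι).le, ?_⟩
    rwa [hw.2, sub_self, zero_mul]

section worstVal

variable {E Ey : Type*} {U : Set E} {S : Set Ey} {g : Ey → E → ℝ}

theorem bddAbove_image_sInf_image (hS : S.Finite) {y₀ : Ey} (hy₀ : y₀ ∈ S)
    (hbdd : BddAbove (g y₀ '' U)) : BddAbove ((fun ξ => sInf ((fun y => g y ξ) '' S)) '' U) := by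
  obtain ⟨M, hM⟩ := hbdd
  refine ⟨M, ?_⟩
  rintro _ ⟨ξ, hξ, rfl⟩
  exact (csInf_le (hS.image _).bddBelow ⟨y₀, hy₀, rfl⟩).trans (hM ⟨ξ, hξ, rfl⟩)

theorem worstVal_le_of_forall_exists_le (hUne : U.Nonempty) (hS : S.Finite) {c : ℝ}
    (h : ∀ ξ ∈ U, ∃ y ∈ S, g y ξ ≤ c) : worstVal U S g ≤ c := by
  refine csSup_le (hUne.image _) ?_
  rintro _ ⟨ξ, hξ, rfl⟩
  obtain ⟨y, hy, hle⟩ := h ξ hξ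
  exact (csInf_le (hS.image _).bddBelow ⟨y, hy, rfl⟩).trans hle

theorem exists_le_worstVal (hS : S.Finite) (hSne : S.Nonempty)
    (hbdd : ∀ y ∈ S, BddAbove (g y '' U)) : ∀ ξ ∈ U, ∃ y ∈ S, g y ξ ≤ worstVal U S g := by
  intro ξ hξ
  obtain ⟨y, hy, hmin⟩ := (hSne.image fun y => g y ξ).csInf_mem (hS.image _)
  obtain ⟨y₀, hy₀⟩ := hSne
  exact ⟨y, hy, hmin.trans_le <|
    le_csSup (bddAbove_image_sInf_image hS hy₀ (hbdd y₀ hy₀)) ⟨ξ, hξ, rfl⟩⟩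

theorem le_worstVal_of_forall_le {T : Set Ey} (hT : T.Finite) (hTne : T.Nonempty)
    (hbdd : ∀ y ∈ T, BddAbove (g y '' U)) {ξ₀ : E} (hξ₀ : ξ₀ ∈ U) {c : ℝ}
    (hc : ∀ y ∈ T, c ≤ g y ξ₀) : c ≤ worstVal U T g := by
  obtain ⟨y₀, hy₀⟩ := hTne
  refine le_trans ?_ (le_csSup (bddAbove_image_sInf_image hT hy₀ (hbdd y₀ hy₀)) ⟨ξ₀, hξ₀, rfl⟩)
  exact le_csInf ((Set.nonempty_of_mem hy₀).image _) (by rintro _ ⟨y, hy, rfl⟩; exact hc y hy)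

theorem le_kVal_of_forall_le {k : ℕ} (hk : 1 ≤ k) (hSne : S.Nonempty) (hUne : U.Nonempty)
    (hbdd : ∀ y ∈ S, BddAbove (g y '' U)) {c : ℝ} (hc : ∀ y ∈ S, ∀ ξ ∈ U, c ≤ g y ξ) :
    c ≤ kVal U S g k := by
  obtain ⟨y₀, hy₀⟩ := hSne
  obtain ⟨ξ₀, hξ₀⟩ := hUne
  refine le_csInf ⟨_, fun _ => y₀, fun _ => hy₀, rfl⟩ ?_
  rintro _ ⟨y, hyS, rfl⟩
  have : Nonempty (Fin k) := ⟨⟨0, hk⟩⟩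
  refine le_worstVal_of_forall_le (Set.finite_range y) (Set.range_nonempty y)
    (by rintro _ ⟨i, rfl⟩; exact hbdd _ (hyS i)) hξ₀ ?_
  rintro _ ⟨i, rfl⟩
  exact hc _ (hyS i) ξ₀ hξ₀

theorem kVal_le_worstVal (hUne : U.Nonempty) (hS : S.Finite)
    (hbdd : ∀ y ∈ S, BddAbove (g y '' U)) {k : ℕ} {T : Finset Ey} (hTne : T.Nonempty)
    (hTS : ↑T ⊆ S) (hTk : #T ≤ k) :
    kVal U S g k ≤ worstVal U T g := by
  obtain ⟨y, hy⟩ : ∃ y : Fin k → Ey, Set.range y = T := by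
    have : Nonempty T := hTne.to_subtype
    let e : T ↪ Fin k := T.equivFin.toEmbedding.trans (Fin.castLEEmb hTk)
    refine ⟨Subtype.val ∘ Function.invFun e, ?_⟩
    rw [Set.range_comp, (Function.invFun_surjective e.injective).range_eq, Set.image_univ,
      Subtype.range_coe]
  obtain ⟨ξ₀, hξ₀⟩ := hUne
  have hlow :
      BddBelow {v | ∃ y : Fin k → Ey, (∀ i, y i ∈ S) ∧ v = worstVal U (Set.range y) g} := by
    refine ⟨sInf ((fun y => g y ξ₀) '' S), ?_⟩
    rintro _ ⟨y', hy'S, rfl⟩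
    have : Nonempty (Fin k) := ⟨⟨0, hTne.card_pos.trans_le hTk⟩⟩
    refine le_worstVal_of_forall_le (Set.finite_range y') (Set.range_nonempty y')
      (by rintro _ ⟨i, rfl⟩; exact hbdd _ (hy'S i)) hξ₀ ?_
    rintro _ ⟨i, rfl⟩
    exact csInf_le (hS.image _).bddBelow ⟨_, hy'S i, rfl⟩
  exact csInf_le hlow ⟨y, fun i => hTS (hy ▸ Set.mem_range_self i), by rw [hy]⟩

theorem kVal_le_worstVal_add [TopologicalSpace E] [AddCommGroup E] [Module ℝ E]
    [IsTopologicalAddGroup E] [ContinuousSMul ℝ E] [FiniteDimensional ℝ E]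
    (hUcomp : IsCompact U) (hUconv : Convex ℝ U) (hUne : U.Nonempty) (hS : S.Finite)
    (hSne : S.Nonempty) (hcont : ∀ y ∈ S, ContinuousOn (g y) U)
    (hconc : ∀ y ∈ S, ConcaveOn ℝ U (g y)) {δ : ℝ}
    (hδ : ∀ ξ ∈ U, ∀ y ∈ S, ∀ y' ∈ S, g y ξ ≤ g y' ξ + δ) {α : ℝ} (hα : 0 ≤ α) {k : ℕ}
    (hk1 : 1 ≤ k) (hk : ((Module.finrank ℝ E : ℝ) + 1 - k) * δ ≤ (Module.finrank ℝ E + 1) * α) :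
    kVal U S g k ≤ worstVal U S g + α := by
  have hbdd : ∀ y ∈ S, BddAbove (g y '' U) := fun y hy =>
    (hUcomp.image_of_continuousOn (hcont y hy)).bddAbove
  obtain ⟨T, hTS, hTcard, hTcov⟩ := exists_subset_card_le_finrank_add_one_forall_exists_le
    (s := hS.toFinset) (fun y hy => hconc y (hS.mem_toFinset.1 hy))
    (by simpa using exists_le_worstVal hS hSne hbdd)
  have hTS' : ∀ y ∈ T, y ∈ S := fun y hy => hS.mem_toFinset.1 (hTS hy)
  obtain ⟨w, hw, hwv⟩ := exists_mem_stdSimplex_forall_sum_mul_le (ι := T) hUcomp hUconv hUne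
    (G := fun y => g y) (fun y => hcont y (hTS' y y.2)) (fun y => hconc y (hTS' y y.2))
    fun ξ hξ => let ⟨y, hy, h⟩ := hTcov ξ hξ; ⟨⟨y, hy⟩, h⟩
  obtain ⟨ξ₀, hξ₀⟩ := hUne
  have hδ0 : 0 ≤ δ := by
    obtain ⟨y₀, hy₀⟩ := hSne
    linarith [hδ ξ₀ hξ₀ y₀ hy₀ y₀ hy₀]
  have : Nonempty T := let ⟨y, hy, _⟩ := hTcov ξ₀ hξ₀; ⟨⟨y, hy⟩⟩
  obtain ⟨R, hRne, hRk, hmass⟩ := exists_finset_card_le_one_sub_sum_mul_le hw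
    (by simpa using (Nat.cast_le (α := ℝ)).2 hTcard) hk1 hδ0 hα hk
  refine (kVal_le_worstVal ⟨ξ₀, hξ₀⟩ hS hbdd (hRne.map (f := .subtype _))
    (fun _ hy => by obtain ⟨i, -, rfl⟩ := mem_map.1 hy; exact hTS' _ i.2)
    (by rwa [card_map])).trans ?_
  refine worstVal_le_of_forall_exists_le ⟨ξ₀, hξ₀⟩ (finite_toSet _) fun ξ hξ => ?_
  obtain ⟨i, hiR, hi⟩ := exists_mem_le_sum_mul_add hw hRne (a := fun i => g i ξ)
    fun i j => hδ ξ hξ _ (hTS' _ i.2) _ (hTS' _ j.2)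
  exact ⟨i, mem_map_of_mem _ hiR, by linarith [hwv ξ hξ]⟩

end worstVal

theorem sub_mul_le_mul_of_mul_exp_neg_div_le {n k δ α : ℝ} (hn : 0 ≤ n) (hδ : 0 < δ)
    (h : n * Real.exp (-(α / δ)) ≤ k) : (n - k) * δ ≤ n * α := by
  have hlin : n * (1 - α / δ) ≤ k :=
    (mul_le_mul_of_nonneg_left (by linarith [Real.add_one_le_exp (-(α / δ))]) hn).trans h
  calc (n - k) * δ ≤ n * (α / δ) * δ := mul_le_mul_of_nonneg_right (by linarith) hδ.le
    _ = n * α := by field_simp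

theorem csInf_image_le_csInf_image_add {β : Type*} {X : Set β} (hX : X.Nonempty) {F G : β → ℝ}
    (hF : BddBelow (F '' X)) {α : ℝ} (h : ∀ x ∈ X, F x ≤ G x + α) :
    sInf (F '' X) ≤ sInf (G '' X) + α := by
  rw [← sub_le_iff_le_add]
  refine le_csInf (hX.image G) ?_
  rintro _ ⟨x, hx, rfl⟩
  linarith [csInf_le hF ⟨x, hx, rfl⟩, h x hx]

theorem stmt_4_general (nx ny nξ : ℕ)
    (X : Set (EuclideanSpace ℝ (Fin nx))) (hXcomp : IsCompact X) (hXne : X.Nonempty)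
    (Y : Set (EuclideanSpace ℝ (Fin ny))) (hYfin : Y.Finite)
    (Yx : EuclideanSpace ℝ (Fin nx) → Set (EuclideanSpace ℝ (Fin ny)))
    (hYxsub : ∀ x ∈ X, Yx x ⊆ Y) (hYxne : ∀ x ∈ X, (Yx x).Nonempty)
    (U : Set (EuclideanSpace ℝ (Fin nξ))) (hUcomp : IsCompact U) (hUconv : Convex ℝ U)
    (hUne : U.Nonempty)
    (f : EuclideanSpace ℝ (Fin nx) → EuclideanSpace ℝ (Fin ny) →
      EuclideanSpace ℝ (Fin nξ) → ℝ)
    (hfcont : Continuous fun p : EuclideanSpace ℝ (Fin nx) × EuclideanSpace ℝ (Fin ny) ×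
      EuclideanSpace ℝ (Fin nξ) => f p.1 p.2.1 p.2.2)
    (hconc : ∀ x ∈ X, ∀ y ∈ Y, ConcaveOn ℝ U (f x y))
    (L : ℝ) (hL : 0 < L)
    (hlip : ∀ x ∈ X, ∀ ξ ∈ U, ∀ y ∈ Y, ∀ y' ∈ Y, |f x y ξ - f x y' ξ| ≤ L * ‖y - y'‖)
    (hdiam : 0 < Metric.diam Y)
    (α : ℝ) (hα : 0 ≤ α)
    (k : ℕ) (hk1 : 1 ≤ k)
    (hk : ((nξ : ℝ) + 1) * Real.exp (-(α / (L * Metric.diam Y))) ≤ (k : ℝ)) :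
    sInf ((fun x => kVal U (Yx x) (f x) k) '' X) ≤
      sInf ((fun x => worstVal U (Yx x) (f x)) '' X) + α := by
  obtain ⟨M, hM⟩ := (hXcomp.prod (hYfin.isCompact.prod hUcomp)).exists_bound_of_continuousOn
    hfcont.continuousOn
  have hcont (x y) : Continuous (f x y) := hfcont.comp (f := fun ξ => (x, y, ξ)) (by fun_prop)
  have hbdd (x y) : BddAbove (f x y '' U) := (hUcomp.image (hcont x y)).bddAbove
  refine csInf_image_le_csInf_image_add hXne ⟨-M, ?_⟩ fun x hx => ?_
  · rintro _ ⟨x, hx, rfl⟩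
    refine le_kVal_of_forall_le hk1 (hYxne x hx) hUne (fun y _ => hbdd x y) fun y hy ξ hξ => ?_
    exact neg_le_of_abs_le (hM (x, y, ξ) ⟨hx, hYxsub x hx hy, hξ⟩)
  refine kVal_le_worstVal_add (δ := L * Metric.diam Y) hUcomp hUconv hUne
    (hYfin.subset (hYxsub x hx)) (hYxne x hx)
    (fun y _ => (hcont x y).continuousOn) (fun y hy => hconc x hx y (hYxsub x hx hy))
    (fun ξ hξ y hy y' hy' => ?_) hα hk1 ?_
  · have hyy' : ‖y - y'‖ ≤ Metric.diam Y := by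
      rw [← dist_eq_norm]
      exact Metric.dist_le_diam_of_mem hYfin.isBounded (hYxsub x hx hy) (hYxsub x hx hy')
    have := hlip x hx ξ hξ y (hYxsub x hx hy) y' (hYxsub x hx hy')
    nlinarith [abs_le.1 this, mul_le_mul_of_nonneg_left hyy' hL.le]
  · rw [finrank_euclideanSpace_fin]
    exact sub_mul_le_mul_of_mul_exp_neg_div_le (by positivity) (mul_pos hL hdiam) hk

/-- If `f` is `L`-Lipschitz in `y`, `diam(Y) > 0`, `α ≥ 0` and
`k ≥ (n_ξ+1)·e^{−α/(L·diam(Y))}` is a positive integer, then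
`opt(k) ≤ opt(2RO) + α`. -/
theorem stmt_4 (nx ny nξ : ℕ) (hnx : 0 < nx) (hny : 0 < ny) (hnξ : 0 < nξ)
    (X : Set (EuclideanSpace ℝ (Fin nx))) (hXcomp : IsCompact X) (hXne : X.Nonempty)
    (Y : Set (EuclideanSpace ℝ (Fin ny))) (hYfin : Y.Finite) (hYne : Y.Nonempty)
    (hYint : ∀ y ∈ Y, ∀ i, ∃ z : ℤ, y i = (z : ℝ))
    (Yx : EuclideanSpace ℝ (Fin nx) → Set (EuclideanSpace ℝ (Fin ny)))
    (hYxsub : ∀ x ∈ X, Yx x ⊆ Y) (hYxne : ∀ x ∈ X, (Yx x).Nonempty)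
    (U : Set (EuclideanSpace ℝ (Fin nξ))) (hUcomp : IsCompact U) (hUconv : Convex ℝ U)
    (hUne : U.Nonempty)
    (f : EuclideanSpace ℝ (Fin nx) → EuclideanSpace ℝ (Fin ny) →
      EuclideanSpace ℝ (Fin nξ) → ℝ)
    (hfcont : Continuous fun p : EuclideanSpace ℝ (Fin nx) × EuclideanSpace ℝ (Fin ny) ×
      EuclideanSpace ℝ (Fin nξ) => f p.1 p.2.1 p.2.2)
    (hconc : ∀ x ∈ X, ∀ y ∈ Y, ConcaveOn ℝ U (f x y))
    (L : ℝ) (hL : 0 < L)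
    (hlip : ∀ x ∈ X, ∀ ξ ∈ U, ∀ y ∈ Y, ∀ y' ∈ Y, |f x y ξ - f x y' ξ| ≤ L * ‖y - y'‖)
    (hdiam : 0 < Metric.diam Y)
    (α : ℝ) (hα : 0 ≤ α)
    (k : ℕ) (hk1 : 1 ≤ k)
    (hk : ((nξ : ℝ) + 1) * Real.exp (-(α / (L * Metric.diam Y))) ≤ (k : ℝ)) :
    sInf ((fun x => kVal U (Yx x) (f x) k) '' X) ≤
      sInf ((fun x => worstVal U (Yx x) (f x)) '' X) + α :=
  stmt_4_general nx ny nξ X hXcomp hXne Y hYfin Yx hYxsub hYxne U hUcomp hUconv hUne f hfcont hconc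
    L hL hlip hdiam α hα k hk1 hk
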